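/- For every step size s with 0 < s ≤ 1/L, the sequence {y_k} generated by critical NAG obeys lim_{k→∞} [ s k · min_{0 ≤ i ≤ k} ‖∇f(y_i)‖² ] = 0, and the objective value is bounded: f(y_k) − f(x⋆) ≤ f(y₀) − f(x⋆) + (1/2)‖v₁‖² for all k ≥ 0, where v_k = (x_k − x_{k−1})/√s. -/

import Mathlib

/-! The energy `V k = f (y k) - f xstar + ‖x (k + 1) - x k‖ ^ 2 / (2 s)` drops by at least
`s / 2 * ‖∇f (y k)‖ ^ 2` at every step. This comes from the inequality
`f a + ⟪∇f a, b - a⟫ + ‖∇f b - ∇f a‖ ^ 2 / (2 L) ≤ f b` for convex `L`-smooth `f`, applied to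
`a = y (k + 1)`, `b = y k`, together with `s ≤ 1 / L`. Hence `V k ≤ V 0`, which is the bound on the
objective, and the squared gradient norms are summable. The running minimum of a summable
nonnegative sequence is antitone and summable, so `k` times it tends to `0`. -/

open Set Filter Topology RealInnerProductSpace

variable {E : Type*} [NormedAddCommGroup E] [InnerProductSpace ℝ E] [CompleteSpace E]
  {f : E → ℝ}

theorem HasGradientAt.hasDerivAt_comp_add_smul {g a v : E} {t : ℝ}
    (h : HasGradientAt f g (a + t • v)) :
    HasDerivAt (fun τ : ℝ => f (a + τ • v)) ⟪g, v⟫ t := by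
  have hline : HasDerivAt (fun τ : ℝ => a + τ • v) v t := by
    simpa using ((hasDerivAt_id t).smul_const v).const_add a
  have := (hasGradientAt_iff_hasFDerivAt.mp h).comp_hasDerivAt t hline
  simp only [InnerProductSpace.toDual_apply_apply] at this
  exact this

theorem ConvexOn.add_inner_gradient_le (hf : ConvexOn ℝ univ f) {a g : E}
    (h : HasGradientAt f g a) (b : E) : f a + ⟪g, b - a⟫ ≤ f b := by
  have hline : ConvexOn ℝ univ (fun t : ℝ => f (a + t • (b - a))) := by
    simpa [Function.comp_def, AffineMap.lineMap_apply_module', add_comm] using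
      hf.comp_affineMap (AffineMap.lineMap a b)
  have hderiv : HasDerivAt (fun t : ℝ => f (a + t • (b - a))) ⟪g, b - a⟫ 0 :=
    HasGradientAt.hasDerivAt_comp_add_smul (by simpa using h)
  have := hline.le_slope_of_hasDerivAt (mem_univ 0) (mem_univ 1) zero_lt_one hderiv
  rw [slope_def_field] at this
  simp only [one_smul, zero_smul, add_zero, add_sub_cancel, sub_zero, div_one] at this
  linarith

theorem le_add_inner_gradient_add_sq_norm {f' : E → E} {L : ℝ}
    (hf : ∀ z, HasGradientAt f (f' z) z) (hlip : ∀ z w, ‖f' z - f' w‖ ≤ L * ‖z - w‖)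
    (a b : E) : f b ≤ f a + ⟪f' a, b - a⟫ + L / 2 * ‖b - a‖ ^ 2 := by
  set v := b - a
  set φ : ℝ → ℝ := fun t => f (a + t • v) - t * ⟪f' a, v⟫ - L / 2 * t ^ 2 * ‖v‖ ^ 2
  have hφ : ∀ t, HasDerivAt φ (⟪f' (a + t • v), v⟫ - ⟪f' a, v⟫ - L * t * ‖v‖ ^ 2) t := by
    intro t
    have hline : HasDerivAt (fun τ : ℝ => f (a + τ • v)) ⟪f' (a + t • v), v⟫ t :=
      (hf _).hasDerivAt_comp_add_smul
    exact ((hline.sub ((hasDerivAt_id t).mul_const ⟪f' a, v⟫)).sub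
      (((hasDerivAt_pow 2 t).const_mul (L / 2)).mul_const (‖v‖ ^ 2))).congr_deriv (by ring)
  have hφ' : ∀ t, 0 ≤ t → ⟪f' (a + t • v), v⟫ - ⟪f' a, v⟫ - L * t * ‖v‖ ^ 2 ≤ 0 := by
    intro t ht
    have hgap : ‖f' (a + t • v) - f' a‖ ≤ L * (t * ‖v‖) := by
      simpa [norm_smul, abs_of_nonneg ht] using hlip (a + t • v) a
    calc ⟪f' (a + t • v), v⟫ - ⟪f' a, v⟫ - L * t * ‖v‖ ^ 2
        = ⟪f' (a + t • v) - f' a, v⟫ - L * t * ‖v‖ ^ 2 := by rw [inner_sub_left]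
      _ ≤ ‖f' (a + t • v) - f' a‖ * ‖v‖ - L * t * ‖v‖ ^ 2 := by
          gcongr; exact real_inner_le_norm _ _
      _ ≤ L * (t * ‖v‖) * ‖v‖ - L * t * ‖v‖ ^ 2 := by gcongr
      _ = 0 := by ring
  have hanti : AntitoneOn φ (Ici 0) :=
    antitoneOn_of_hasDerivWithinAt_nonpos (convex_Ici 0)
      (fun t _ => (hφ t).continuousAt.continuousWithinAt)
      (fun t _ => (hφ t).hasDerivWithinAt)
      (fun t ht => hφ' t (interior_subset ht))
  have := hanti self_mem_Ici (show (0:ℝ) ≤ 1 from zero_le_one) zero_le_one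
  simp only [φ, v, one_smul, zero_smul, add_zero, add_sub_cancel] at this
  linarith

theorem ConvexOn.add_inner_gradient_add_sq_norm_le {f' : E → E} {L : ℝ}
    (hconv : ConvexOn ℝ univ f) (hf : ∀ z, HasGradientAt f (f' z) z) (hL : 0 < L)
    (hlip : ∀ z w, ‖f' z - f' w‖ ≤ L * ‖z - w‖) (a b : E) :
    f a + ⟪f' a, b - a⟫ + 1 / (2 * L) * ‖f' b - f' a‖ ^ 2 ≤ f b := by
  set Δ := f' b - f' a
  -- compare both sides with `f` at the gradient step `b - L⁻¹ • Δ`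
  have hlower := hconv.add_inner_gradient_le (hf a) (b - L⁻¹ • Δ)
  have hupper := le_add_inner_gradient_add_sq_norm hf hlip b (b - L⁻¹ • Δ)
  have hΔ : ⟪f' b, Δ⟫ - ⟪f' a, Δ⟫ = ‖Δ‖ ^ 2 := by
    rw [← inner_sub_left, real_inner_self_eq_norm_sq]
  rw [show b - L⁻¹ • Δ - a = (b - a) - L⁻¹ • Δ by abel, inner_sub_right,
    real_inner_smul_right] at hlower
  rw [sub_sub_cancel_left, inner_neg_right, real_inner_smul_right, norm_neg, norm_smul,
    mul_pow, Real.norm_eq_abs, sq_abs] at hupper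
  have hL' : L ≠ 0 := hL.ne'
  field_simp at hlower hupper ⊢
  nlinarith [hΔ]

theorem criticalNAG_energy_step {f' : E → E} {L s : ℝ}
    (hconv : ConvexOn ℝ univ f) (hf : ∀ z, HasGradientAt f (f' z) z)
    (hlip : ∀ z w, ‖f' z - f' w‖ ≤ L * ‖z - w‖) (hs : 0 < s) (hsL : s ≤ 1 / L)
    {x₀ x₁ x₂ y₀ y₁ : E} (hx₁ : x₁ = y₀ - s • f' y₀) (hx₂ : x₂ = y₁ - s • f' y₁)
    (hy₁ : y₁ = (2 : ℝ) • x₁ - x₀) :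
    f y₁ + 1 / (2 * s) * ‖x₂ - x₁‖ ^ 2 + s / 2 * ‖f' y₀‖ ^ 2
      ≤ f y₀ + 1 / (2 * s) * ‖x₁ - x₀‖ ^ 2 := by
  have hL : 0 < L := one_div_pos.mp (hs.trans_le hsL)
  have hcoco := hconv.add_inner_gradient_add_sq_norm_le hf hL hlip y₁ y₀
  have hstep : s / 2 * ‖f' y₀ - f' y₁‖ ^ 2 ≤ 1 / (2 * L) * ‖f' y₀ - f' y₁‖ ^ 2 := by
    have hs' : s / 2 ≤ 1 / (2 * L) := by
      calc s / 2 ≤ 1 / L / 2 := by linarith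
        _ = 1 / (2 * L) := by ring
    exact mul_le_mul_of_nonneg_right hs' (sq_nonneg _)
  set w := x₁ - x₀
  have hx : x₂ - x₁ = w - s • f' y₁ := by linear_combination (norm := module) hx₂ + hy₁
  have hy : y₀ - y₁ = s • f' y₀ - w := by linear_combination (norm := module) -hy₁ - hx₁
  clear_value w
  have hidentity : 1 / (2 * s) * ‖w - s • f' y₁‖ ^ 2 + s / 2 * ‖f' y₀‖ ^ 2
      = 1 / (2 * s) * ‖w‖ ^ 2 + ⟪f' y₁, s • f' y₀ - w⟫ + s / 2 * ‖f' y₀ - f' y₁‖ ^ 2 := by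
    rw [norm_sub_sq_real w, norm_sub_sq_real (f' y₀), inner_sub_right, real_inner_smul_right,
      real_inner_smul_right, norm_smul, mul_pow, Real.norm_eq_abs, sq_abs,
      real_inner_comm w, real_inner_comm (f' y₀)]
    field_simp
    ring
  rw [hx]
  rw [hy] at hcoco
  linarith

theorem summable_of_succ_add_le {V q : ℕ → ℝ} (hV : ∀ k, 0 ≤ V k) (hq : ∀ k, 0 ≤ q k)
    (hdecr : ∀ k, V (k + 1) + q k ≤ V k) : Summable q := by
  have htelescope : ∀ n, ∑ i ∈ Finset.range n, q i + V n ≤ V 0 := by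
    intro n
    induction n with
    | zero => simp
    | succ n ih => rw [Finset.sum_range_succ]; linarith [hdecr n]
  exact summable_of_sum_range_le hq fun n => by linarith [htelescope n, hV n]

theorem Antitone.tendsto_nat_mul_of_summable {m : ℕ → ℝ} (hm : Antitone m)
    (hsum : Summable m) : Tendsto (fun n : ℕ => (n : ℝ) * m n) atTop (𝓝 0) := by
  have hm0 : ∀ n, 0 ≤ m n := hm.le_of_tendsto hsum.tendsto_atTop_zero
  have hhalf : Tendsto (fun n : ℕ => n / 2) atTop atTop :=
    tendsto_atTop_atTop.2 fun b => ⟨2 * b, fun n hn => by omega⟩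
  -- the block sums over `[n/2, n)` are differences of partial sums with the same limit
  have hblock : Tendsto (fun n => ∑ i ∈ Finset.Ico (n / 2) n, m i) atTop (𝓝 0) := by
    have := hsum.hasSum.tendsto_sum_nat
    simpa [Finset.sum_Ico_eq_sub _ (Nat.div_le_self _ 2)] using
      (this.sub (this.comp hhalf))
  refine squeeze_zero (fun n => mul_nonneg n.cast_nonneg (hm0 n)) (fun n => ?_)
    (by simpa using hblock.const_mul 2)
  have hcard : (n : ℝ) ≤ 2 * (Finset.Ico (n / 2) n).card := by
    rw [Nat.card_Ico]; exact_mod_cast (by omega : n ≤ 2 * (n - n / 2))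
  have hle : (Finset.Ico (n / 2) n).card • m n ≤ ∑ i ∈ Finset.Ico (n / 2) n, m i :=
    Finset.card_nsmul_le_sum _ _ _ fun i hi => hm (Finset.mem_Ico.1 hi).2.le
  rw [nsmul_eq_mul] at hle
  nlinarith [hm0 n]

theorem tendsto_mul_sInf_image_Iic_of_summable {q : ℕ → ℝ} (hq : ∀ i, 0 ≤ q i)
    (hsum : Summable q) :
    Tendsto (fun k : ℕ => (k : ℝ) * sInf (q '' Iic k)) atTop (𝓝 0) := by
  have hbdd : ∀ k, BddBelow (q '' Iic k) := fun k => ⟨0, by rintro _ ⟨i, -, rfl⟩; exact hq i⟩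
  have hne : ∀ k, (q '' Iic k).Nonempty := fun k => (nonempty_Iic).image q
  have hanti : Antitone fun k => sInf (q '' Iic k) := fun j k hjk =>
    csInf_le_csInf (hbdd k) (hne j) (image_mono (Iic_subset_Iic.2 hjk))
  have hle : ∀ k, sInf (q '' Iic k) ≤ q k := fun k => csInf_le (hbdd k) ⟨k, self_mem_Iic, rfl⟩
  have hnonneg : ∀ k, 0 ≤ sInf (q '' Iic k) := fun k =>
    le_csInf (hne k) (by rintro _ ⟨i, -, rfl⟩; exact hq i)
  exact hanti.tendsto_nat_mul_of_summable (hsum.of_nonneg_of_le hnonneg hle)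

theorem critical_NAG_convergence
    (s L : ℝ) (hs : 0 < s) (hsL : s ≤ 1 / L)
    {d : ℕ} (f : EuclideanSpace ℝ (Fin d) → ℝ)
    (f' : EuclideanSpace ℝ (Fin d) → EuclideanSpace ℝ (Fin d))
    (xstar : EuclideanSpace ℝ (Fin d))
    (x y : ℕ → EuclideanSpace ℝ (Fin d))
    (hconv : ConvexOn ℝ Set.univ f)
    (hgrad : ∀ z, HasGradientAt f (f' z) z)
    (hlip : ∀ z w, ‖f' z - f' w‖ ≤ L * ‖z - w‖)
    (hmin : ∀ z, f xstar ≤ f z)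
    (hx : ∀ k : ℕ, 1 ≤ k → x k = y (k - 1) - s • f' (y (k - 1)))
    (hy : ∀ k : ℕ, 1 ≤ k → y k = (2 : ℝ) • x k - x (k - 1)) :
    Filter.Tendsto
      (fun k : ℕ => s * (k : ℝ) *
        sInf ((fun i : ℕ => ‖f' (y i)‖ ^ 2) '' Set.Iic k))
      Filter.atTop (nhds 0) ∧
    (∀ k : ℕ, f (y k) - f xstar ≤
      f (y 0) - f xstar + (1 / 2) * ‖(Real.sqrt s)⁻¹ • (x 1 - x 0)‖ ^ 2) := by
  obtain ⟨V, hV⟩ : ∃ V : ℕ → ℝ,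
      ∀ k, V k = f (y k) - f xstar + 1 / (2 * s) * ‖x (k + 1) - x k‖ ^ 2 := ⟨_, fun _ => rfl⟩
  have hdecr : ∀ k, V (k + 1) + s / 2 * ‖f' (y k)‖ ^ 2 ≤ V k := fun k => by
    have := criticalNAG_energy_step hconv hgrad hlip hs hsL
      (by simpa using hx (k + 1) (by omega)) (by simpa using hx (k + 2) (by omega))
      (by simpa using hy (k + 1) (by omega))
    rw [hV, hV]
    linarith
  have hgap : ∀ k, f (y k) - f xstar ≤ V k := fun k => by
    rw [hV]
    have : 0 ≤ 1 / (2 * s) * ‖x (k + 1) - x k‖ ^ 2 := by positivity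
    linarith
  have hsq_nonneg : ∀ k, 0 ≤ s / 2 * ‖f' (y k)‖ ^ 2 := fun k => by positivity
  have hsum : Summable fun i => ‖f' (y i)‖ ^ 2 :=
    (summable_mul_left_iff (by positivity : s / 2 ≠ 0)).1 <|
      summable_of_succ_add_le (fun k => (sub_nonneg.2 (hmin _)).trans (hgap k)) hsq_nonneg hdecr
  have hV0 : V 0 = f (y 0) - f xstar + 1 / 2 * ‖(Real.sqrt s)⁻¹ • (x 1 - x 0)‖ ^ 2 := by
    rw [hV, norm_smul, mul_pow, norm_inv, Real.norm_of_nonneg (Real.sqrt_nonneg s), inv_pow,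
      Real.sq_sqrt hs.le]
    ring
  refine ⟨?_, fun k => ?_⟩
  · simpa [mul_assoc] using
      (tendsto_mul_sInf_image_Iic_of_summable (fun i => sq_nonneg _) hsum).const_mul s
  · rw [← hV0]
    exact (hgap k).trans (antitone_nat_of_succ_le (fun n => by linarith [hdecr n, hsq_nonneg n])
      (Nat.zero_le k))
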